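/- arXiv:0906.0690 — 5 statements merged into one kernel-verified Lean document; each statement's English description precedes it below -/
import Mathlib

section
/- Let X ~ P and Y ~ Q be independent random variables on ℕ, with X Poisson bounded with ratio λ and Y Poisson bounded with ratio μ. Then X + Y (with distribution the convolution P*Q) is Poisson bounded with ratio λ + μ, and for every α ∈ (0,1) the thinned distribution T_α(P) is Poisson bounded with ratio αλ. -/
open scoped BigOperators ENNReal
open Filter Topology

noncomputable section

/-- A probability mass function on ℕ: nonnegative values summing to 1. -/
def IsPMF (P : ℕ → ℝ) : Prop := (∀ x, 0 ≤ P x) ∧ HasSum P 1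

/-- The α-thinning of a distribution `P` on ℕ. -/
def thin (α : ℝ) (P : ℕ → ℝ) (z : ℕ) : ℝ :=
  ∑' x : ℕ, P x * (x.choose z : ℝ) * α ^ z * (1 - α) ^ (x - z)

/-- Convolution of two distributions on ℕ. -/
def conv (P Q : ℕ → ℝ) (n : ℕ) : ℝ :=
  ∑ k ∈ Finset.range (n + 1), P k * Q (n - k)

/-- The k-th factorial moment of a distribution `P` on ℕ, valued in `[0,∞]`. -/
def fmE (P : ℕ → ℝ) (k : ℕ) : ℝ≥0∞ :=
  ∑' x : ℕ, ENNReal.ofReal (P x) * (x.descFactorial k : ℝ≥0∞)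

/-- Poisson boundedness with ratio λ: `E[X^(k↓)] ≤ λ^k` for all `k ≥ 0`. -/
def IsPB (P : ℕ → ℝ) (lam : ℝ) : Prop :=
  ∀ k : ℕ, fmE P k ≤ ENNReal.ofReal lam ^ k


/-
The factorial moments behave multiplicatively under both operations. Vandermonde's identity for
falling factorials, `(a + b)^(k↓) = ∑ C(k, i) a^(i↓) b^(k-i↓)`, gives
`E[(X + Y)^(k↓)] = ∑ C(k, i) E[X^(i↓)] E[Y^(k-i↓)] ≤ ∑ C(k, i) λ^i μ^(k-i) = (λ + μ)^k`.
A Binomial(x, α) variable has `k`-th factorial moment `α^k x^(k↓)`, so thinning multiplies the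
`k`-th factorial moment by `α^k`. All series are taken in `ℝ≥0∞`, where they may be freely
reordered.
-/

open Finset

namespace Nat

theorem descFactorial_add (a b k : ℕ) :
    (a + b).descFactorial k =
      ∑ ij ∈ antidiagonal k, k.choose ij.1 * (a.descFactorial ij.1 * b.descFactorial ij.2) := by
  rw [descFactorial_eq_factorial_mul_choose, add_choose_eq, mul_sum]
  refine sum_congr rfl fun ij hij => ?_
  obtain rfl : ij.1 + ij.2 = k := mem_antidiagonal.1 hij
  rw [descFactorial_eq_factorial_mul_choose, descFactorial_eq_factorial_mul_choose,
    ← choose_mul_factorial_mul_factorial (le_add_right ij.1 ij.2), add_tsub_cancel_left]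
  ring

theorem descFactorial_mul_choose {k z : ℕ} (hkz : k ≤ z) (x : ℕ) :
    z.descFactorial k * x.choose z = x.descFactorial k * (x - k).choose (z - k) := by
  rcases le_or_gt z x with hzx | hxz
  · rw [descFactorial_eq_factorial_mul_choose z, descFactorial_eq_factorial_mul_choose x,
      mul_assoc, mul_assoc, mul_comm (z.choose k), choose_mul hkz]
  · rw [choose_eq_zero_of_lt hxz, mul_zero]
    rcases le_or_gt k x with hkx | hxk
    · rw [choose_eq_zero_of_lt (by omega), mul_zero]
    · rw [descFactorial_eq_zero_iff_lt.2 hxk, zero_mul]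

end Nat

/-- The `k`-th factorial moment of the binomial law, before normalising `a + b = 1`. -/
theorem sum_range_choose_mul_descFactorial_mul_pow {R : Type*} [CommSemiring R] (a b : R)
    (x k : ℕ) :
    ∑ z ∈ range (x + 1), (x.choose z * z.descFactorial k : R) * a ^ z * b ^ (x - z) =
      x.descFactorial k * a ^ k * (a + b) ^ (x - k) := by
  rcases lt_or_ge x k with hxk | hkx
  · rw [Nat.descFactorial_eq_zero_iff_lt.2 hxk, Nat.cast_zero, zero_mul, zero_mul]
    refine sum_eq_zero fun z hz => ?_
    rw [Nat.descFactorial_eq_zero_iff_lt.2 (by grind), Nat.cast_zero, mul_zero, zero_mul,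
      zero_mul]
  obtain ⟨m, rfl⟩ := Nat.exists_eq_add_of_le hkx
  have hlow : ∑ z ∈ range k, (((k + m).choose z * z.descFactorial k : ℕ) : R) * a ^ z *
      b ^ (k + m - z) = 0 :=
    sum_eq_zero fun z hz => by
      rw [Nat.descFactorial_eq_zero_iff_lt.2 (mem_range.1 hz), mul_zero, Nat.cast_zero,
        zero_mul, zero_mul]
  push_cast at hlow
  rw [add_assoc, sum_range_add, hlow, zero_add, add_tsub_cancel_left, add_pow, mul_sum]
  refine sum_congr rfl fun j hj => ?_
  have hchoose := Nat.descFactorial_mul_choose (Nat.le_add_right k j) (k + m)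
  rw [add_tsub_cancel_left, add_tsub_cancel_left] at hchoose
  rw [Nat.add_sub_add_left, pow_add, mul_comm ((k + m).choose (k + j) : R),
    ← Nat.cast_mul, hchoose, Nat.cast_mul]
  ring

section FactorialMoments

variable {P Q : ℕ → ℝ}

theorem ENNReal.tsum_sum_antidiagonal {A : Type*} [AddCommMonoid A] [HasAntidiagonal A]
    (f : A × A → ℝ≥0∞) : ∑' n, ∑ p ∈ antidiagonal n, f p = ∑' p, f p := by
  rw [← HasAntidiagonal.sigmaAntidiagonalEquivProd.tsum_eq f, ENNReal.tsum_sigma']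
  exact tsum_congr fun n => (Finset.tsum_subtype (antidiagonal n) f).symm

theorem ENNReal.tsum_mul_tsum {β γ : Type*} (f : β → ℝ≥0∞) (g : γ → ℝ≥0∞) :
    (∑' b, f b) * ∑' c, g c = ∑' p : β × γ, f p.1 * g p.2 := by
  rw [ENNReal.tsum_prod', ← ENNReal.tsum_mul_right]
  exact tsum_congr fun b => ENNReal.tsum_mul_left.symm

theorem ofReal_conv (hP : ∀ x, 0 ≤ P x) (hQ : ∀ x, 0 ≤ Q x) (n : ℕ) :
    ENNReal.ofReal (conv P Q n) =
      ∑ p ∈ antidiagonal n, ENNReal.ofReal (P p.1) * ENNReal.ofReal (Q p.2) := by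
  rw [conv, ← Nat.sum_antidiagonal_eq_sum_range_succ fun i j => P i * Q j,
    ENNReal.ofReal_sum_of_nonneg fun p _ => mul_nonneg (hP _) (hQ _)]
  exact sum_congr rfl fun p _ => ENNReal.ofReal_mul (hP _)

theorem fmE_conv (hP : ∀ x, 0 ≤ P x) (hQ : ∀ x, 0 ≤ Q x) (k : ℕ) :
    fmE (conv P Q) k = ∑ ij ∈ antidiagonal k, k.choose ij.1 * (fmE P ij.1 * fmE Q ij.2) := by
  calc fmE (conv P Q) k
      = ∑' n, ∑ p ∈ antidiagonal n, ENNReal.ofReal (P p.1) * ENNReal.ofReal (Q p.2) *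
          ((p.1 + p.2).descFactorial k : ℝ≥0∞) := by
        refine tsum_congr fun n => ?_
        rw [ofReal_conv hP hQ, sum_mul]
        exact sum_congr rfl fun p hp => by rw [mem_antidiagonal.1 hp]
    _ = ∑' p : ℕ × ℕ, ∑ ij ∈ antidiagonal k, k.choose ij.1 *
          ((ENNReal.ofReal (P p.1) * p.1.descFactorial ij.1) *
            (ENNReal.ofReal (Q p.2) * p.2.descFactorial ij.2)) := by
        rw [ENNReal.tsum_sum_antidiagonal]
        refine tsum_congr fun p => ?_
        rw [Nat.descFactorial_add]
        push_cast
        rw [mul_sum]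
        exact sum_congr rfl fun ij _ => by ring
    _ = _ := by
        rw [Summable.tsum_finsetSum fun _ _ => ENNReal.summable]
        refine sum_congr rfl fun ij _ => ?_
        rw [ENNReal.tsum_mul_left, fmE, fmE, ENNReal.tsum_mul_tsum]

end FactorialMoments

section Thinning

variable {α : ℝ} {P : ℕ → ℝ}

theorem choose_mul_pow_mul_pow_le_one (hα₀ : 0 ≤ α) (hα₁ : α ≤ 1) (x z : ℕ) :
    (x.choose z : ℝ) * α ^ z * (1 - α) ^ (x - z) ≤ 1 := by
  rcases lt_or_ge x z with hxz | hzx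
  · simp [Nat.choose_eq_zero_of_lt hxz]
  calc (x.choose z : ℝ) * α ^ z * (1 - α) ^ (x - z)
      ≤ ∑ i ∈ range (x + 1), α ^ i * (1 - α) ^ (x - i) * x.choose i := by
        rw [mul_rotate]
        exact single_le_sum (f := fun i => α ^ i * (1 - α) ^ (x - i) * x.choose i)
          (fun i _ => by positivity) (mem_range.2 (Nat.lt_succ_of_le hzx))
    _ = 1 := by rw [← add_pow, add_sub_cancel, one_pow]

theorem ofReal_thin (hα₀ : 0 ≤ α) (hα₁ : α ≤ 1) (hP₀ : ∀ x, 0 ≤ P x) (hP : Summable P)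
    (z : ℕ) :
    ENNReal.ofReal (thin α P z) = ∑' x, ENNReal.ofReal (P x) *
      ((x.choose z : ℝ≥0∞) * ENNReal.ofReal α ^ z * ENNReal.ofReal (1 - α) ^ (x - z)) := by
  have hβ : 0 ≤ 1 - α := sub_nonneg.2 hα₁
  have hterm : ∀ x, P x * (x.choose z : ℝ) * α ^ z * (1 - α) ^ (x - z) =
      P x * ((x.choose z : ℝ) * α ^ z * (1 - α) ^ (x - z)) := fun x => by ring
  have hsumm : Summable fun x => P x * ((x.choose z : ℝ) * α ^ z * (1 - α) ^ (x - z)) :=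
    hP.of_nonneg_of_le (fun x => mul_nonneg (hP₀ x) (by positivity))
      fun x => mul_le_of_le_one_right (hP₀ x) (choose_mul_pow_mul_pow_le_one hα₀ hα₁ x z)
  rw [thin, tsum_congr hterm, ENNReal.ofReal_tsum_of_nonneg
    (fun x => mul_nonneg (hP₀ x) (by positivity)) hsumm]
  refine tsum_congr fun x => ?_
  rw [ENNReal.ofReal_mul (hP₀ x), ENNReal.ofReal_mul (by positivity),
    ENNReal.ofReal_mul (by positivity), ENNReal.ofReal_natCast, ENNReal.ofReal_pow hα₀,
    ENNReal.ofReal_pow hβ]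

theorem fmE_thin (hα₀ : 0 ≤ α) (hα₁ : α ≤ 1) (hP₀ : ∀ x, 0 ≤ P x) (hP : Summable P)
    (k : ℕ) : fmE (thin α P) k = ENNReal.ofReal α ^ k * fmE P k := by
  set a := ENNReal.ofReal α
  set b := ENNReal.ofReal (1 - α)
  have hab : a + b = 1 := by
    rw [← ENNReal.ofReal_add hα₀ (sub_nonneg.2 hα₁), add_sub_cancel, ENNReal.ofReal_one]
  have hinner : ∀ x : ℕ,
      ∑' z : ℕ, (x.choose z : ℝ≥0∞) * a ^ z * b ^ (x - z) * z.descFactorial k =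
        a ^ k * x.descFactorial k := by
    intro x
    rw [tsum_eq_sum (s := range (x + 1)) fun z hz => by
      rw [Nat.choose_eq_zero_of_lt (by simpa using hz), Nat.cast_zero, zero_mul, zero_mul,
        zero_mul]]
    have := sum_range_choose_mul_descFactorial_mul_pow a b x k
    rw [hab, one_pow, mul_one] at this
    rw [mul_comm, ← this]
    exact sum_congr rfl fun z _ => by ring
  calc fmE (thin α P) k
      = ∑' z, ∑' x, ENNReal.ofReal (P x) *
          ((x.choose z : ℝ≥0∞) * a ^ z * b ^ (x - z) * z.descFactorial k) := by
        refine tsum_congr fun z => ?_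
        rw [ofReal_thin hα₀ hα₁ hP₀ hP, ← ENNReal.tsum_mul_right]
        exact tsum_congr fun x => by ring
    _ = ∑' x, ENNReal.ofReal (P x) * (a ^ k * x.descFactorial k) := by
        rw [ENNReal.tsum_comm]
        exact tsum_congr fun x => by rw [ENNReal.tsum_mul_left, hinner]
    _ = a ^ k * fmE P k := by
        rw [fmE, ← ENNReal.tsum_mul_left]
        exact tsum_congr fun x => by ring

end Thinning

/-- Poisson boundedness is preserved under convolution (independent sums) and thinning. -/
theorem pb_conv_and_thin (P Q : ℕ → ℝ) (hP : IsPMF P) (hQ : IsPMF Q)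
    (lam mu : ℝ) (hlam : 0 < lam) (hmu : 0 < mu)
    (hPpb : IsPB P lam) (hQpb : IsPB Q mu) :
    IsPB (conv P Q) (lam + mu) ∧
      ∀ α ∈ Set.Ioo (0 : ℝ) 1, IsPB (thin α P) (α * lam) := by
  constructor
  · intro k
    rw [fmE_conv hP.1 hQ.1, ENNReal.ofReal_add hlam.le hmu.le, (Commute.all _ _).add_pow']
    refine sum_le_sum fun ij _ => ?_
    rw [nsmul_eq_mul]
    gcongr
    exacts [hPpb ij.1, hQpb ij.2]
  · intro α hα k
    rw [fmE_thin hα.1.le hα.2.le hP.1 hP.2.summable, ENNReal.ofReal_mul hα.1.le, mul_pow]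
    exact mul_le_mul_right (hPpb k) _
end
end

section
/- (Weak law of thin numbers, non-i.i.d. case) Let P_1, P_2, … be an arbitrary sequence of distributions on ℕ, and let P^{(n)} = P_1 * P_2 * ⋯ * P_n be the convolution of the first n of them. Suppose that as n → ∞: (a) max_{1≤i≤n} [1 − T_{1/n}P_i(0)] → 0; (b) Σ_{i=1}^n [1 − T_{1/n}P_i(0)] → λ; and (c) Σ_{i=1}^n [1 − T_{1/n}P_i(0) − T_{1/n}P_i(1)] → 0, where λ > 0. Then ‖T_{1/n}(P^{(n)}) − Po(λ)‖ → 0 as n → ∞. -/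
/-! Thinning commutes with convolution (Vandermonde's identity), so
`T_α(P_0 * ⋯ * P_{n-1}) = T_αP_0 * ⋯ * T_αP_{n-1}`. Total variation is subadditive under
convolution, so each `T_αP_i` may be replaced by the Bernoulli law with the same mass
`q_i = 1 − T_αP_i(0)` off zero, at cost `1 − T_αP_i(0) − T_αP_i(1)`, and that in turn by `Po(q_i)`,
at cost `q_i²`. The convolution of these Poisson laws is `Po(Σ q_i)`, which is within
`|Σ q_i − λ|` of `Po(λ)`. For `α = 1/n` the three errors vanish by (c), by
`Σ q_i² ≤ (max q_i) Σ q_i` with (a) and (b), and by (b).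
-/

open scoped BigOperators
open Filter Topology

noncomputable section

/-- The convolution `P^{(n)} = P_0 * P_1 * ⋯ * P_{n-1}` of the first n
distributions in a sequence. -/
def convMany (P : ℕ → ℕ → ℝ) : ℕ → ℕ → ℝ
  | 0 => fun n => if n = 0 then 1 else 0
  | n + 1 => conv (convMany P n) (P n)

/-- The Poisson distribution with parameter λ. -/
def poissonPMF (lam : ℝ) (x : ℕ) : ℝ := Real.exp (-lam) * lam ^ x / x.factorial

/-- Total variation distance between distributions on ℕ. -/
def tvDist (P Q : ℕ → ℝ) : ℝ := (1 / 2) * ∑' k : ℕ, |P k - Q k|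

open Finset

namespace IsPMF

variable {P : ℕ → ℝ}

lemma nonneg (h : IsPMF P) (x : ℕ) : 0 ≤ P x := h.1 x

lemma summable (h : IsPMF P) : Summable P := h.2.summable

lemma tsum_eq_one (h : IsPMF P) : ∑' x, P x = 1 := h.2.tsum_eq

lemma le_one (h : IsPMF P) (x : ℕ) : P x ≤ 1 := le_hasSum h.2 x fun y _ => h.1 y

lemma add_le_one (h : IsPMF P) : P 0 + P 1 ≤ 1 := by
  simpa [sum_range_succ] using sum_le_hasSum (range 2) (fun i _ => h.1 i) h.2

end IsPMF

def binomWeight (α : ℝ) (x z : ℕ) : ℝ := x.choose z * α ^ z * (1 - α) ^ (x - z)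

section binomWeight

variable {α : ℝ}

lemma thin_eq_tsum_binomWeight (P : ℕ → ℝ) (z : ℕ) :
    thin α P z = ∑' x, P x * binomWeight α x z :=
  tsum_congr fun x => by rw [binomWeight]; ring

lemma binomWeight_of_lt {x z : ℕ} (h : x < z) : binomWeight α x z = 0 := by
  simp [binomWeight, Nat.choose_eq_zero_of_lt h]

lemma binomWeight_nonneg (hα0 : 0 ≤ α) (hα1 : α ≤ 1) (x z : ℕ) : 0 ≤ binomWeight α x z := by
  have : 0 ≤ 1 - α := sub_nonneg.2 hα1
  unfold binomWeight
  positivity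

lemma hasSum_binomWeight (α : ℝ) (x : ℕ) : HasSum (binomWeight α x) 1 := by
  have hsum : ∑ z ∈ range (x + 1), binomWeight α x z = 1 := by
    have h := add_pow α (1 - α) x
    rw [add_sub_cancel, one_pow] at h
    rw [h]
    exact sum_congr rfl fun z _ => by rw [binomWeight]; ring
  rw [← hsum]
  exact hasSum_sum_of_ne_finset_zero fun z hz =>
    binomWeight_of_lt (by simpa [Nat.lt_succ_iff] using hz)

lemma binomWeight_le_one (hα0 : 0 ≤ α) (hα1 : α ≤ 1) (x z : ℕ) : binomWeight α x z ≤ 1 :=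
  le_hasSum (hasSum_binomWeight α x) z fun _ _ => binomWeight_nonneg hα0 hα1 _ _

lemma binomWeight_mul_binomWeight (a b i j : ℕ) :
    binomWeight α a i * binomWeight α b j
      = a.choose i * b.choose j * (α ^ (i + j) * (1 - α) ^ (a + b - (i + j))) := by
  by_cases h : i ≤ a ∧ j ≤ b
  · rw [show a + b - (i + j) = (a - i) + (b - j) by omega, pow_add, pow_add, binomWeight,
      binomWeight]
    ring
  · rcases not_and_or.1 h with h | h <;>
      simp [binomWeight, Nat.choose_eq_zero_of_lt (not_le.1 h)]

lemma binomWeight_add (a b z : ℕ) :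
    binomWeight α (a + b) z
      = ∑ p ∈ antidiagonal z, binomWeight α a p.1 * binomWeight α b p.2 := by
  rw [sum_congr rfl fun p hp => by rw [binomWeight_mul_binomWeight, mem_antidiagonal.1 hp],
    ← sum_mul, binomWeight, Nat.add_choose_eq]
  push_cast
  ring

end binomWeight

lemma hasSum_sum_antidiagonal {G : ℕ × ℕ → ℝ} (hG : Summable G) :
    HasSum (fun n => ∑ p ∈ antidiagonal n, G p) (∑' p, G p) := by
  have hσ := HasAntidiagonal.sigmaAntidiagonalEquivProd.hasSum_iff.2 hG.hasSum
  exact hσ.sigma fun n => (antidiagonal n).hasSum G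

lemma conv_eq_sum_antidiagonal (P Q : ℕ → ℝ) (n : ℕ) :
    conv P Q n = ∑ p ∈ antidiagonal n, P p.1 * Q p.2 :=
  (Nat.sum_antidiagonal_eq_sum_range_succ_mk (fun p => P p.1 * Q p.2) n).symm

lemma conv_comm (P Q : ℕ → ℝ) : conv P Q = conv Q P := by
  funext n
  rw [conv_eq_sum_antidiagonal, conv_eq_sum_antidiagonal, ← Nat.sum_antidiagonal_swap]
  simp only [Prod.fst_swap, Prod.snd_swap, mul_comm]

lemma conv_ite_zero (P : ℕ → ℝ) : conv (fun n => if n = 0 then 1 else 0) P = P := by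
  funext n
  simp [conv]

lemma hasSum_conv {P Q : ℕ → ℝ} (hP0 : ∀ x, 0 ≤ P x) (hQ0 : ∀ x, 0 ≤ Q x)
    (hP : Summable P) (hQ : Summable Q) :
    HasSum (conv P Q) ((∑' x, P x) * ∑' x, Q x) := by
  have hPQ := hP.mul_of_nonneg hQ hP0 hQ0
  rw [hP.tsum_mul_tsum hQ hPQ, funext (conv_eq_sum_antidiagonal P Q)]
  exact hasSum_sum_antidiagonal hPQ

lemma IsPMF.conv {P Q : ℕ → ℝ} (hP : IsPMF P) (hQ : IsPMF Q) : IsPMF (conv P Q) :=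
  ⟨fun n => sum_nonneg fun k _ => mul_nonneg (hP.nonneg k) (hQ.nonneg _), by
    simpa [hP.tsum_eq_one, hQ.tsum_eq_one] using
      hasSum_conv hP.nonneg hQ.nonneg hP.summable hQ.summable⟩

lemma isPMF_ite_zero : IsPMF fun n => if n = 0 then 1 else 0 :=
  ⟨fun n => by dsimp only; split_ifs <;> norm_num, hasSum_ite_eq 0 1⟩

lemma IsPMF.convMany {A : ℕ → ℕ → ℝ} (h : ∀ i, IsPMF (A i)) (n : ℕ) : IsPMF (convMany A n) := by
  induction n with
  | zero => exact isPMF_ite_zero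
  | succ n ih => exact ih.conv (h n)

section thin

variable {α : ℝ}

lemma summable_mul_binomWeight (hα0 : 0 ≤ α) (hα1 : α ≤ 1) {P : ℕ → ℝ} (hP : IsPMF P) (z : ℕ) :
    Summable fun x => P x * binomWeight α x z :=
  hP.summable.of_nonneg_of_le (fun x => mul_nonneg (hP.nonneg x) (binomWeight_nonneg hα0 hα1 _ _))
    fun x => mul_le_of_le_one_right (hP.nonneg x) (binomWeight_le_one hα0 hα1 _ _)

lemma IsPMF.thin (hα0 : 0 ≤ α) (hα1 : α ≤ 1) {P : ℕ → ℝ} (hP : IsPMF P) : IsPMF (thin α P) := by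
  set G : ℕ × ℕ → ℝ := fun p => P p.1 * binomWeight α p.1 p.2
  have hG0 : 0 ≤ G := fun p => mul_nonneg (hP.nonneg _) (binomWeight_nonneg hα0 hα1 _ _)
  have hrow : ∀ x, HasSum (fun z => G (x, z)) (P x) := fun x => by
    simpa using (hasSum_binomWeight α x).mul_left (P x)
  have hGs : Summable G := (summable_prod_of_nonneg hG0).2
    ⟨fun x => (hrow x).summable, by simpa only [(hrow _).tsum_eq] using hP.summable⟩
  have hG : HasSum G 1 := hP.2.unique (hGs.hasSum.prod_fiberwise hrow) ▸ hGs.hasSum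
  refine ⟨fun z => ?_, ((Equiv.prodComm ℕ ℕ).hasSum_iff.2 hG).prod_fiberwise fun z => ?_⟩
  · rw [thin_eq_tsum_binomWeight]
    exact tsum_nonneg fun x => hG0 (x, z)
  · rw [thin_eq_tsum_binomWeight]
    exact (summable_mul_binomWeight hα0 hα1 hP z).hasSum

lemma thin_conv (hα0 : 0 ≤ α) (hα1 : α ≤ 1) {P Q : ℕ → ℝ} (hP : IsPMF P) (hQ : IsPMF Q) :
    thin α (conv P Q) = conv (thin α P) (thin α Q) := by
  funext z
  have hPQ : Summable fun p : ℕ × ℕ => P p.1 * Q p.2 :=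
    hP.summable.mul_of_nonneg hQ.summable hP.nonneg hQ.nonneg
  have hG : Summable fun p : ℕ × ℕ => P p.1 * Q p.2 * binomWeight α (p.1 + p.2) z :=
    hPQ.of_nonneg_of_le
      (fun p => mul_nonneg (mul_nonneg (hP.nonneg _) (hQ.nonneg _))
        (binomWeight_nonneg hα0 hα1 _ _))
      fun p => mul_le_of_le_one_right (mul_nonneg (hP.nonneg _) (hQ.nonneg _))
        (binomWeight_le_one hα0 hα1 _ _)
  have hprod : ∀ i j, Summable fun p : ℕ × ℕ =>
      P p.1 * binomWeight α p.1 i * (Q p.2 * binomWeight α p.2 j) := fun i j =>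
    (summable_mul_binomWeight hα0 hα1 hP i).mul_of_nonneg (summable_mul_binomWeight hα0 hα1 hQ j)
      (fun x => mul_nonneg (hP.nonneg x) (binomWeight_nonneg hα0 hα1 _ _))
      (fun x => mul_nonneg (hQ.nonneg x) (binomWeight_nonneg hα0 hα1 _ _))
  calc thin α (conv P Q) z
      = ∑' x, ∑ p ∈ antidiagonal x, P p.1 * Q p.2 * binomWeight α (p.1 + p.2) z := by
        rw [thin_eq_tsum_binomWeight]
        refine tsum_congr fun x => ?_
        rw [conv_eq_sum_antidiagonal, sum_mul]
        exact sum_congr rfl fun p hp => by rw [mem_antidiagonal.1 hp]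
    _ = ∑' p : ℕ × ℕ, P p.1 * Q p.2 * binomWeight α (p.1 + p.2) z :=
        (hasSum_sum_antidiagonal hG).tsum_eq
    _ = ∑' p : ℕ × ℕ, ∑ q ∈ antidiagonal z,
          P p.1 * binomWeight α p.1 q.1 * (Q p.2 * binomWeight α p.2 q.2) := by
        refine tsum_congr fun p => ?_
        rw [binomWeight_add, mul_sum]
        exact sum_congr rfl fun q _ => by ring
    _ = ∑ q ∈ antidiagonal z, ∑' p : ℕ × ℕ,
          P p.1 * binomWeight α p.1 q.1 * (Q p.2 * binomWeight α p.2 q.2) :=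
        Summable.tsum_finsetSum fun q _ => hprod q.1 q.2
    _ = conv (thin α P) (thin α Q) z := by
        rw [conv_eq_sum_antidiagonal]
        refine sum_congr rfl fun q _ => ?_
        rw [thin_eq_tsum_binomWeight, thin_eq_tsum_binomWeight]
        exact ((summable_mul_binomWeight hα0 hα1 hP q.1).tsum_mul_tsum
          (summable_mul_binomWeight hα0 hα1 hQ q.2) (hprod q.1 q.2)).symm

lemma thin_convMany (hα0 : 0 ≤ α) (hα1 : α ≤ 1) {A : ℕ → ℕ → ℝ} (h : ∀ i, IsPMF (A i)) (n : ℕ) :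
    thin α (convMany A n) = convMany (fun i => thin α (A i)) n := by
  induction n with
  | zero =>
    funext z
    rw [thin_eq_tsum_binomWeight, tsum_eq_single 0 fun x hx => by simp [convMany, hx]]
    rcases z with _ | z <;> simp [convMany, binomWeight]
  | succ n ih => rw [convMany, convMany, thin_conv hα0 hα1 (IsPMF.convMany h n) (h n), ih]

end thin

section tvDist

variable {P Q R : ℕ → ℝ}

lemma summable_abs_sub (hP : Summable P) (hQ : Summable Q) : Summable fun k => |P k - Q k| :=
  (hP.abs.add hQ.abs).of_nonneg_of_le (fun _ => abs_nonneg _) fun _ => abs_sub _ _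

lemma tvDist_nonneg (P Q : ℕ → ℝ) : 0 ≤ tvDist P Q :=
  mul_nonneg (by norm_num) (tsum_nonneg fun _ => abs_nonneg _)

lemma tvDist_comm (P Q : ℕ → ℝ) : tvDist P Q = tvDist Q P := by
  simp only [tvDist, abs_sub_comm]

lemma tvDist_triangle (hP : Summable P) (hQ : Summable Q) (hR : Summable R) :
    tvDist P R ≤ tvDist P Q + tvDist Q R := by
  rw [tvDist, tvDist, tvDist, ← mul_add,
    ← (summable_abs_sub hP hQ).tsum_add (summable_abs_sub hQ hR)]
  gcongr
  · exact summable_abs_sub hP hR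
  · exact (summable_abs_sub hP hQ).add (summable_abs_sub hQ hR)
  · exact abs_sub_le _ _ _

lemma tvDist_eq_tsum_max (hP : IsPMF P) (hQ : IsPMF Q) :
    tvDist P Q = ∑' k, max (P k - Q k) 0 := by
  have hPQ := summable_abs_sub hP.summable hQ.summable
  have hmax : Summable fun k => max (P k - Q k) 0 :=
    hPQ.of_nonneg_of_le (fun _ => le_max_right _ _) fun _ => max_le (le_abs_self _) (abs_nonneg _)
  have habs : ∀ k, |P k - Q k| = 2 * max (P k - Q k) 0 - (P k - Q k) := fun k => by
    rcases le_total (P k - Q k) 0 with h | h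
    · rw [abs_of_nonpos h, max_eq_right h]; ring
    · rw [abs_of_nonneg h, max_eq_left h]; ring
  rw [tvDist, tsum_congr habs, (hmax.mul_left 2).tsum_sub (hP.summable.sub hQ.summable),
    tsum_mul_left, hP.summable.tsum_sub hQ.summable, hP.tsum_eq_one, hQ.tsum_eq_one]
  ring

lemma tvDist_eq_max_of_le_of_ne (hP : IsPMF P) (hQ : IsPMF Q) (j : ℕ)
    (h : ∀ k ≠ j, P k ≤ Q k) : tvDist P Q = max (P j - Q j) 0 := by
  rw [tvDist_eq_tsum_max hP hQ, tsum_eq_single j fun k hk => max_eq_right (sub_nonpos.2 (h k hk))]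

lemma tvDist_conv_right_le (hP : Summable P) (hQ : Summable Q) (hR : IsPMF R) :
    tvDist (conv P R) (conv Q R) ≤ tvDist P Q := by
  set D : ℕ → ℝ := fun k => |P k - Q k|
  have hD := summable_abs_sub hP hQ
  have hDR : HasSum (conv D R) (∑' k, D k) := by
    simpa [hR.tsum_eq_one] using hasSum_conv (fun _ => abs_nonneg _) hR.nonneg hD hR.summable
  have hpt : ∀ n, |conv P R n - conv Q R n| ≤ conv D R n := fun n => by
    rw [conv, conv, conv, ← sum_sub_distrib]
    refine (abs_sum_le_sum_abs _ _).trans_eq (sum_congr rfl fun k _ => ?_)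
    rw [← sub_mul, abs_mul, abs_of_nonneg (hR.nonneg _)]
  rw [tvDist, tvDist, ← hDR.tsum_eq]
  gcongr
  · exact hDR.summable.of_nonneg_of_le (fun _ => abs_nonneg _) hpt
  · exact hDR.summable
  · exact hpt _

lemma tvDist_conv_conv_le {P₁ P₂ Q₁ Q₂ : ℕ → ℝ} (hP₁ : IsPMF P₁) (hP₂ : IsPMF P₂)
    (hQ₁ : IsPMF Q₁) (hQ₂ : IsPMF Q₂) :
    tvDist (conv P₁ P₂) (conv Q₁ Q₂) ≤ tvDist P₁ Q₁ + tvDist P₂ Q₂ := by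
  refine (tvDist_triangle (hP₁.conv hP₂).summable (hQ₁.conv hP₂).summable
    (hQ₁.conv hQ₂).summable).trans
      (add_le_add (tvDist_conv_right_le hP₁.summable hQ₁.summable hP₂) ?_)
  rw [conv_comm Q₁, conv_comm Q₁]
  exact tvDist_conv_right_le hP₂.summable hQ₂.summable hQ₁

lemma tvDist_convMany_le {A B : ℕ → ℕ → ℝ} (hA : ∀ i, IsPMF (A i)) (hB : ∀ i, IsPMF (B i))
    (n : ℕ) : tvDist (convMany A n) (convMany B n) ≤ ∑ i ∈ range n, tvDist (A i) (B i) := by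
  induction n with
  | zero => simp [convMany, tvDist]
  | succ n ih =>
    rw [sum_range_succ]
    exact (tvDist_conv_conv_le (.convMany hA n) (hA n) (.convMany hB n) (hB n)).trans
      (add_le_add_left ih _)

end tvDist

section poissonPMF

lemma poissonPMF_nonneg {lam : ℝ} (h : 0 ≤ lam) (x : ℕ) : 0 ≤ poissonPMF lam x := by
  unfold poissonPMF
  positivity

lemma hasSum_poissonPMF (lam : ℝ) : HasSum (poissonPMF lam) 1 := by
  have h := (NormedSpace.expSeries_div_hasSum_exp lam).mul_left (Real.exp (-lam))
  rw [← Real.exp_eq_exp_ℝ, ← Real.exp_add, neg_add_cancel, Real.exp_zero] at h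
  rwa [show poissonPMF lam = _ from funext fun n => mul_div_assoc _ _ _]

lemma isPMF_poissonPMF {lam : ℝ} (h : 0 ≤ lam) : IsPMF (poissonPMF lam) :=
  ⟨poissonPMF_nonneg h, hasSum_poissonPMF lam⟩

lemma conv_poissonPMF (a b : ℝ) : conv (poissonPMF a) (poissonPMF b) = poissonPMF (a + b) := by
  funext n
  rw [conv, poissonPMF, neg_add, Real.exp_add, add_pow, mul_div_assoc, sum_div, mul_sum]
  refine sum_congr rfl fun k hk => ?_
  rw [Nat.cast_choose ℝ (Nat.lt_succ_iff.1 (mem_range.1 hk)), poissonPMF, poissonPMF]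
  field_simp

lemma convMany_poissonPMF (q : ℕ → ℝ) (n : ℕ) :
    convMany (fun i => poissonPMF (q i)) n = poissonPMF (∑ i ∈ range n, q i) := by
  induction n with
  | zero =>
    funext x
    rcases x with _ | x <;> simp [convMany, poissonPMF]
  | succ n ih => rw [convMany, ih, conv_poissonPMF, sum_range_succ]

lemma tvDist_poissonPMF_le {a b : ℝ} (ha : 0 ≤ a) (hab : a ≤ b) :
    tvDist (poissonPMF a) (poissonPMF b) ≤ b - a := by
  have hc : 0 ≤ b - a := sub_nonneg.2 hab
  calc tvDist (poissonPMF a) (poissonPMF b)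
      = tvDist (conv (fun n => if n = 0 then 1 else 0) (poissonPMF a))
          (conv (poissonPMF (b - a)) (poissonPMF a)) := by
        rw [conv_ite_zero, conv_poissonPMF, sub_add_cancel]
    _ ≤ tvDist (fun n => if n = 0 then 1 else 0) (poissonPMF (b - a)) :=
        tvDist_conv_right_le isPMF_ite_zero.summable
          (isPMF_poissonPMF hc).summable (isPMF_poissonPMF ha)
    _ = max (1 - Real.exp (-(b - a))) 0 := by
        rw [tvDist_eq_max_of_le_of_ne isPMF_ite_zero (isPMF_poissonPMF hc) 0
          fun k hk => by simp [hk, poissonPMF_nonneg hc]]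
        simp [poissonPMF]
    _ ≤ b - a := max_le (by linarith [Real.add_one_le_exp (-(b - a))]) hc

lemma tvDist_poissonPMF_le_abs {a b : ℝ} (ha : 0 ≤ a) (hb : 0 ≤ b) :
    tvDist (poissonPMF a) (poissonPMF b) ≤ |a - b| := by
  rcases le_total a b with h | h
  · simpa [abs_sub_comm] using (tvDist_poissonPMF_le ha h).trans (le_abs_self (b - a))
  · rw [tvDist_comm]
    exact (tvDist_poissonPMF_le hb h).trans (le_abs_self _)

end poissonPMF

def bernoulliPMF (p : ℝ) (k : ℕ) : ℝ := if k = 0 then 1 - p else if k = 1 then p else 0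

section bernoulliPMF

variable {p : ℝ}

lemma isPMF_bernoulliPMF (h0 : 0 ≤ p) (h1 : p ≤ 1) : IsPMF (bernoulliPMF p) := by
  refine ⟨fun k => ?_, ?_⟩
  · unfold bernoulliPMF
    split_ifs <;> linarith
  · convert hasSum_sum_of_ne_finset_zero (L := .unconditional ℕ) (s := range 2) fun k hk => ?_
    · simp [sum_range_succ, bernoulliPMF]
    · simp only [mem_range, not_lt] at hk
      simp [bernoulliPMF, show k ≠ 0 by omega, show k ≠ 1 by omega]

lemma tvDist_bernoulliPMF {T : ℕ → ℝ} (hT : IsPMF T) :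
    tvDist T (bernoulliPMF (1 - T 0)) = 1 - T 0 - T 1 := by
  have hB := isPMF_bernoulliPMF (sub_nonneg.2 (hT.le_one 0)) (sub_le_self _ (hT.nonneg 0))
  rw [tvDist_comm, tvDist_eq_max_of_le_of_ne hB hT 1 fun k hk => ?_]
  · simp only [bernoulliPMF, one_ne_zero, if_false, if_true]
    exact max_eq_left (by linarith [hT.add_le_one])
  · unfold bernoulliPMF
    split_ifs with h0
    · simp [h0]
    · exact hT.nonneg k

lemma tvDist_bernoulliPMF_poissonPMF_le (h0 : 0 ≤ p) (h1 : p ≤ 1) :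
    tvDist (bernoulliPMF p) (poissonPMF p) ≤ p ^ 2 := by
  have hexp : 1 - p ≤ Real.exp (-p) := by linarith [Real.add_one_le_exp (-p)]
  rw [tvDist_eq_max_of_le_of_ne (isPMF_bernoulliPMF h0 h1) (isPMF_poissonPMF h0) 1 fun k hk => ?_]
  · simp only [bernoulliPMF, one_ne_zero, if_false, if_true, poissonPMF]
    refine max_le ?_ (sq_nonneg p)
    simp only [pow_one, Nat.factorial_one, Nat.cast_one, div_one]
    nlinarith
  · unfold bernoulliPMF
    split_ifs with hk0
    · simpa [hk0, poissonPMF] using hexp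
    · exact poissonPMF_nonneg h0 k

end bernoulliPMF

lemma tvDist_thin_convMany_poissonPMF_le {α : ℝ} (hα0 : 0 ≤ α) (hα1 : α ≤ 1)
    {P : ℕ → ℕ → ℝ} (hP : ∀ i, IsPMF (P i)) (n : ℕ) {lam : ℝ} (hlam : 0 ≤ lam) :
    tvDist (thin α (convMany P n)) (poissonPMF lam)
      ≤ ∑ i ∈ range n, (1 - thin α (P i) 0 - thin α (P i) 1)
        + ∑ i ∈ range n, (1 - thin α (P i) 0) ^ 2
        + |∑ i ∈ range n, (1 - thin α (P i) 0) - lam| := by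
  set T : ℕ → ℕ → ℝ := fun i => thin α (P i)
  set q : ℕ → ℝ := fun i => 1 - T i 0
  have hT : ∀ i, IsPMF (T i) := fun i => (hP i).thin hα0 hα1
  have hq0 : ∀ i, 0 ≤ q i := fun i => sub_nonneg.2 ((hT i).le_one 0)
  have hq1 : ∀ i, q i ≤ 1 := fun i => sub_le_self _ ((hT i).nonneg 0)
  have hB : ∀ i, IsPMF (bernoulliPMF (q i)) := fun i => isPMF_bernoulliPMF (hq0 i) (hq1 i)
  have hPo : ∀ i, IsPMF (poissonPMF (q i)) := fun i => isPMF_poissonPMF (hq0 i)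
  rw [thin_convMany hα0 hα1 hP]
  calc tvDist (convMany T n) (poissonPMF lam)
      ≤ tvDist (convMany T n) (convMany (fun i => bernoulliPMF (q i)) n)
        + tvDist (convMany (fun i => bernoulliPMF (q i)) n)
            (convMany (fun i => poissonPMF (q i)) n)
        + tvDist (convMany (fun i => poissonPMF (q i)) n) (poissonPMF lam) := by
        linarith [tvDist_triangle (IsPMF.convMany hT n).summable (IsPMF.convMany hB n).summable
          (isPMF_poissonPMF hlam).summable, tvDist_triangle (IsPMF.convMany hB n).summable
          (IsPMF.convMany hPo n).summable (isPMF_poissonPMF hlam).summable]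
    _ ≤ ∑ i ∈ range n, tvDist (T i) (bernoulliPMF (q i))
        + ∑ i ∈ range n, tvDist (bernoulliPMF (q i)) (poissonPMF (q i))
        + |∑ i ∈ range n, q i - lam| := by
        gcongr
        · exact tvDist_convMany_le hT hB n
        · exact tvDist_convMany_le hB hPo n
        · rw [convMany_poissonPMF]
          exact tvDist_poissonPMF_le_abs (sum_nonneg fun i _ => hq0 i) hlam
    _ ≤ _ := by
        gcongr with i
        · exact (tvDist_bernoulliPMF (hT i)).le
        · exact tvDist_bernoulliPMF_poissonPMF_le (hq0 i) (hq1 i)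

lemma tendsto_sum_sq_of_uniformly_small {a : ℕ → ℕ → ℝ} {lam : ℝ} (ha0 : ∀ n i, 0 ≤ a n i)
    (hsmall : ∀ ε > (0 : ℝ), ∀ᶠ n : ℕ in atTop, ∀ i < n, a n i < ε)
    (hsum : Tendsto (fun n => ∑ i ∈ range n, a n i) atTop (𝓝 lam)) :
    Tendsto (fun n => ∑ i ∈ range n, a n i ^ 2) atTop (𝓝 0) := by
  have hM : 0 < |lam| + 1 := by positivity
  refine tendsto_order.2 ⟨fun b hb => Eventually.of_forall fun n =>
    hb.trans_le (sum_nonneg fun i _ => sq_nonneg _), fun ε hε => ?_⟩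
  filter_upwards [hsmall (ε / (|lam| + 1)) (by positivity),
    hsum.eventually (gt_mem_nhds ((le_abs_self lam).trans_lt (lt_add_one _)))] with n hmax hbound
  calc ∑ i ∈ range n, a n i ^ 2 ≤ ∑ i ∈ range n, ε / (|lam| + 1) * a n i :=
        sum_le_sum fun i hi => by
          rw [sq]
          exact mul_le_mul_of_nonneg_right (hmax i (mem_range.1 hi)).le (ha0 n i)
    _ = ε / (|lam| + 1) * ∑ i ∈ range n, a n i := (mul_sum _ _ _).symm
    _ < ε / (|lam| + 1) * (|lam| + 1) := by gcongr
    _ = ε := div_mul_cancel₀ _ hM.ne'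

theorem weak_law_of_thin_numbers_noniid_general (P : ℕ → ℕ → ℝ) (hP : ∀ i, IsPMF (P i))
    (lam : ℝ)
    (ha : ∀ ε > (0 : ℝ), ∀ᶠ n : ℕ in atTop,
      ∀ i < n, 1 - thin (1 / (n : ℝ)) (P i) 0 < ε)
    (hb : Tendsto (fun n : ℕ =>
        ∑ i ∈ Finset.range n, (1 - thin (1 / (n : ℝ)) (P i) 0)) atTop (nhds lam))
    (hc : Tendsto (fun n : ℕ =>
        ∑ i ∈ Finset.range n,
          (1 - thin (1 / (n : ℝ)) (P i) 0 - thin (1 / (n : ℝ)) (P i) 1)) atTop (nhds 0)) :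
    Tendsto (fun n : ℕ => tvDist (thin (1 / (n : ℝ)) (convMany P n)) (poissonPMF lam))
      atTop (nhds 0) := by
  have hα0 : ∀ n : ℕ, 0 ≤ 1 / (n : ℝ) := fun n => by positivity
  have hα1 : ∀ n : ℕ, 1 / (n : ℝ) ≤ 1 := fun n => by simpa using Nat.cast_inv_le_one n
  have hq0 : ∀ (n : ℕ) i, 0 ≤ 1 - thin (1 / (n : ℝ)) (P i) 0 := fun n i =>
    sub_nonneg.2 (((hP i).thin (hα0 n) (hα1 n)).le_one 0)
  have hlam : 0 ≤ lam := ge_of_tendsto' hb fun n => sum_nonneg fun i _ => hq0 n i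
  have hsq := tendsto_sum_sq_of_uniformly_small hq0 ha hb
  have hdev : Tendsto (fun n : ℕ => |∑ i ∈ range n, (1 - thin (1 / (n : ℝ)) (P i) 0) - lam|)
      atTop (𝓝 0) := by
    simpa using (hb.sub_const lam).abs
  refine squeeze_zero (fun n => tvDist_nonneg _ _)
    (fun n => tvDist_thin_convMany_poissonPMF_le (hα0 n) (hα1 n) hP n hlam) ?_
  simpa using (hc.add hsq).add hdev

/-- Weak law of thin numbers, non-i.i.d. case. Conditions:
(a) `max_{i<n} [1 − T_{1/n}P_i(0)] → 0`;
(b) `Σ_{i<n} [1 − T_{1/n}P_i(0)] → λ`;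
(c) `Σ_{i<n} [1 − T_{1/n}P_i(0) − T_{1/n}P_i(1)] → 0`.
Then `‖T_{1/n}(P^{(n)}) − Po(λ)‖ → 0`. -/
theorem weak_law_of_thin_numbers_noniid (P : ℕ → ℕ → ℝ) (hP : ∀ i, IsPMF (P i))
    (lam : ℝ) (hlam : 0 < lam)
    (ha : ∀ ε > (0 : ℝ), ∀ᶠ n : ℕ in atTop,
      ∀ i < n, 1 - thin (1 / (n : ℝ)) (P i) 0 < ε)
    (hb : Tendsto (fun n : ℕ =>
        ∑ i ∈ Finset.range n, (1 - thin (1 / (n : ℝ)) (P i) 0)) atTop (nhds lam))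
    (hc : Tendsto (fun n : ℕ =>
        ∑ i ∈ Finset.range n,
          (1 - thin (1 / (n : ℝ)) (P i) 0 - thin (1 / (n : ℝ)) (P i) 1)) atTop (nhds 0)) :
    Tendsto (fun n : ℕ => tvDist (thin (1 / (n : ℝ)) (convMany P n)) (poissonPMF lam))
      atTop (nhds 0) :=
  weak_law_of_thin_numbers_noniid_general P hP lam ha hb hc

end
end

section
/- (Characterization of the Poisson distribution) Let P be a distribution on ℕ with mean λ > 0. If P = U_α^λ(P) for some α ∈ (0,1), then P = Po(λ). -/
/-!
The generating function `f(s) = ∑ P(x) sˣ` turns thinning into the substitution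
`s ↦ 1 - α(1 - s)` and convolution with `Po(μ)` into multiplication by `e^{μ(s-1)}`. Hence a
fixed point of `U_α^λ` satisfies `f(s) = f(1 - α(1 - s)) e^{(1-α)λ(s-1)}` on `[0,1]`, i.e.
`g(s) = f(s) e^{-λ(s-1)}` is invariant under the contraction `s ↦ 1 - α(1 - s)` towards `1`.
Iterating, `g(s) = lim g(1 - αⁿ(1 - s)) = g(1) = 1` by continuity, so `f` is the generating
function of `Po(λ)`, and a generating function determines its coefficients.
-/

open scoped BigOperators
open Filter Topology

noncomputable section

/-- The "thinning Markov chain" operator `U_α^λ(P) = T_α(P) * Po((1−α)λ)`. -/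
def Uop (α lam : ℝ) (P : ℕ → ℝ) : ℕ → ℝ :=
  conv (thin α P) (poissonPMF ((1 - α) * lam))

open Set

def pgf (P : ℕ → ℝ) (s : ℝ) : ℝ := ∑' x, P x * s ^ x

lemma norm_mul_pow_le {a s : ℝ} (hs : ‖s‖ ≤ 1) (n : ℕ) : ‖a * s ^ n‖ ≤ ‖a‖ := by
  rw [norm_mul, norm_pow]
  exact mul_le_of_le_one_right (norm_nonneg _) (pow_le_one₀ (norm_nonneg _) hs)

lemma summable_norm_mul_pow {P : ℕ → ℝ} (hP : Summable fun x => ‖P x‖) {s : ℝ} (hs : ‖s‖ ≤ 1) :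
    Summable fun x => ‖P x * s ^ x‖ :=
  hP.of_nonneg_of_le (fun _ => norm_nonneg _) fun x => norm_mul_pow_le hs x

lemma continuousOn_pgf {P : ℕ → ℝ} (hP : Summable fun x => ‖P x‖) :
    ContinuousOn (pgf P) (Icc (-1) 1) :=
  continuousOn_tsum (fun _ => by fun_prop) hP fun x _ hs => norm_mul_pow_le (abs_le.2 hs) x

lemma pgf_zero (P : ℕ → ℝ) : pgf P 0 = P 0 := by
  rw [pgf, tsum_eq_single 0 fun x hx => by simp [hx]]
  simp

lemma pgf_eq_add_mul_pgf_succ {P : ℕ → ℝ} (hP : Summable fun x => ‖P x‖) {s : ℝ}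
    (hs : ‖s‖ ≤ 1) : pgf P s = P 0 + s * pgf (fun x => P (x + 1)) s := by
  rw [pgf, (summable_norm_mul_pow hP hs).of_norm.tsum_eq_zero_add, pgf, ← tsum_mul_left]
  simp only [pow_zero, mul_one, pow_succ]
  congr 1
  exact tsum_congr fun x => by ring

lemma apply_zero_eq_zero_of_pgf_eq_zero {P : ℕ → ℝ} (hP : Summable fun x => ‖P x‖)
    (h : ∀ s ∈ Ioo (0 : ℝ) 1, pgf P s = 0) : P 0 = 0 := by
  have hcont : ContinuousAt (pgf P) 0 :=
    (continuousOn_pgf hP).continuousAt (Icc_mem_nhds (by norm_num) (by norm_num))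
  have hlim : Tendsto (pgf P) (𝓝[>] 0) (𝓝 (P 0)) :=
    pgf_zero P ▸ tendsto_nhdsWithin_of_tendsto_nhds hcont
  refine tendsto_nhds_unique hlim (tendsto_const_nhds.congr' ?_)
  filter_upwards [Ioo_mem_nhdsGT one_pos] with s hs using (h s hs).symm

lemma eq_zero_of_pgf_eq_zero {P : ℕ → ℝ} (hP : Summable fun x => ‖P x‖)
    (h : ∀ s ∈ Ioo (0 : ℝ) 1, pgf P s = 0) : P = 0 := by
  funext n
  induction n generalizing P with
  | zero => exact apply_zero_eq_zero_of_pgf_eq_zero hP h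
  | succ n ih =>
    refine ih ((summable_nat_add_iff 1).2 hP) fun s hs => ?_
    have hsplit := pgf_eq_add_mul_pgf_succ hP (s := s) (by
      rw [Real.norm_eq_abs, abs_of_pos hs.1]; exact hs.2.le)
    rw [h s hs, apply_zero_eq_zero_of_pgf_eq_zero hP h, zero_add] at hsplit
    exact (mul_eq_zero.1 hsplit.symm).resolve_left hs.1.ne'

lemma eq_of_pgf_eqOn {P Q : ℕ → ℝ} (hP : Summable fun x => ‖P x‖)
    (hQ : Summable fun x => ‖Q x‖) (h : EqOn (pgf P) (pgf Q) (Ioo 0 1)) : P = Q := by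
  refine sub_eq_zero.1 (eq_zero_of_pgf_eq_zero (hP.add hQ |>.of_nonneg_of_le
    (fun _ => norm_nonneg _) fun x => norm_sub_le _ _) fun s hs => ?_)
  have hs1 : ‖s‖ ≤ 1 := by rw [Real.norm_eq_abs, abs_of_pos hs.1]; exact hs.2.le
  simp only [pgf, Pi.sub_apply, sub_mul]
  rw [Summable.tsum_sub (summable_norm_mul_pow hP hs1).of_norm
    (summable_norm_mul_pow hQ hs1).of_norm]
  exact sub_eq_zero.2 (h hs)

lemma pgf_conv {P Q : ℕ → ℝ} {s : ℝ} (hP : Summable fun x => ‖P x * s ^ x‖)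
    (hQ : Summable fun x => ‖Q x * s ^ x‖) : pgf (conv P Q) s = pgf P s * pgf Q s := by
  rw [pgf, pgf, pgf, tsum_mul_tsum_eq_tsum_sum_range_of_summable_norm hP hQ]
  refine tsum_congr fun n => ?_
  rw [conv, Finset.sum_mul]
  refine Finset.sum_congr rfl fun k hk => ?_
  rw [← pow_mul_pow_sub s (Nat.lt_succ_iff.1 (Finset.mem_range.1 hk))]
  ring

lemma hasSum_poissonPMF_mul_pow (μ s : ℝ) :
    HasSum (fun x => poissonPMF μ x * s ^ x) (Real.exp (μ * (s - 1))) := by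
  have h := (NormedSpace.expSeries_div_hasSum_exp (μ * s)).mul_left (Real.exp (-μ))
  rw [← Real.exp_eq_exp_ℝ, ← Real.exp_add, show -μ + μ * s = μ * (s - 1) by ring] at h
  exact h.congr_fun fun x => by rw [poissonPMF, mul_pow]; ring

lemma pgf_poissonPMF (μ s : ℝ) : pgf (poissonPMF μ) s = Real.exp (μ * (s - 1)) :=
  (hasSum_poissonPMF_mul_pow μ s).tsum_eq

lemma summable_norm_poissonPMF_mul_pow (μ s : ℝ) :
    Summable fun x => ‖poissonPMF μ x * s ^ x‖ := by
  refine ((Real.summable_pow_div_factorial |μ * s|).mul_left (Real.exp (-μ))).congr fun x => ?_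
  simp only [poissonPMF, norm_mul, norm_div, norm_pow, Real.norm_eq_abs, abs_mul,
    Real.abs_exp, Nat.abs_cast, mul_pow]
  ring

lemma thin_nonneg {P : ℕ → ℝ} (hP0 : ∀ x, 0 ≤ P x) {α : ℝ} (hα : α ∈ Icc (0 : ℝ) 1)
    (z : ℕ) : 0 ≤ thin α P z :=
  tsum_nonneg fun x => mul_nonneg (mul_nonneg (mul_nonneg (hP0 x) (Nat.cast_nonneg _))
    (pow_nonneg hα.1 _)) (pow_nonneg (sub_nonneg.2 hα.2) _)

lemma hasSum_thin_mul_pow {P : ℕ → ℝ} (hP0 : ∀ x, 0 ≤ P x) (hP : Summable P)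
    {α s : ℝ} (hα : α ∈ Icc (0 : ℝ) 1) (hs : s ∈ Icc (0 : ℝ) 1) :
    HasSum (fun z => thin α P z * s ^ z) (pgf P (1 - α * (1 - s))) := by
  obtain ⟨hα0, hα1⟩ := hα
  obtain ⟨hs0, hs1⟩ := hs
  set t := 1 - α * (1 - s)
  have ht : ‖t‖ ≤ 1 := by
    rw [Real.norm_eq_abs, abs_le]; constructor <;> nlinarith
  let F : ℕ → ℕ → ℝ := fun x z => P x * x.choose z * α ^ z * (1 - α) ^ (x - z) * s ^ z
  have hF0 : ∀ x z, 0 ≤ F x z := fun x z =>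
    mul_nonneg (mul_nonneg (mul_nonneg (mul_nonneg (hP0 x) (Nat.cast_nonneg _))
      (pow_nonneg hα0 _)) (pow_nonneg (sub_nonneg.2 hα1) _)) (pow_nonneg hs0 _)
  have hrow : ∀ x, HasSum (F x) (P x * t ^ x) := fun x => by
    have hbinom : ∑ z ∈ Finset.range (x + 1), F x z = P x * t ^ x := by
      rw [show t = α * s + (1 - α) by ring, add_pow, Finset.mul_sum]
      exact Finset.sum_congr rfl fun z _ => by ring
    refine hbinom ▸ hasSum_sum_of_ne_finset_zero fun z hz => ?_
    simp [F, Nat.choose_eq_zero_of_lt (not_lt.1 (Finset.mem_range.not.1 hz))]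
  have hPt : Summable fun x => P x * t ^ x :=
    (summable_norm_mul_pow (hP.congr fun x => (Real.norm_of_nonneg (hP0 x)).symm) ht).of_norm
  have hF : Summable (Function.uncurry F) :=
    (summable_prod_of_nonneg fun p => hF0 p.1 p.2).2
      ⟨fun x => (hrow x).summable, hPt.congr fun x => (hrow x).tsum_eq.symm⟩
  have hcol : (fun z => thin α P z * s ^ z) = fun z => ∑' x, F x z := by
    funext z
    simp only [thin, F, tsum_mul_right]
  have hval : ∑' z, ∑' x, F x z = pgf P t := by
    rw [hF.tsum_comm, pgf]
    exact tsum_congr fun x => (hrow x).tsum_eq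
  exact hcol ▸ hval ▸ hF.prod_symm.prod.hasSum

lemma pgf_Uop {P : ℕ → ℝ} (hP0 : ∀ x, 0 ≤ P x) (hP : Summable P) {α : ℝ}
    (hα : α ∈ Icc (0 : ℝ) 1) (lam : ℝ) {s : ℝ} (hs : s ∈ Icc (0 : ℝ) 1) :
    pgf (Uop α lam P) s = pgf P (1 - α * (1 - s)) * Real.exp ((1 - α) * lam * (s - 1)) := by
  have hthin := hasSum_thin_mul_pow hP0 hP hα hs
  have hthin_norm : Summable fun z => ‖thin α P z * s ^ z‖ :=
    hthin.summable.congr fun z => (Real.norm_of_nonneg (mul_nonneg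
      (thin_nonneg hP0 hα z) (pow_nonneg hs.1 z))).symm
  rw [Uop, pgf_conv hthin_norm (summable_norm_poissonPMF_mul_pow _ s), pgf_poissonPMF, pgf,
    hthin.tsum_eq]

lemma apply_eq_apply_one_of_comp_homothety_eq {g : ℝ → ℝ} {α : ℝ} (hα : α ∈ Ico (0 : ℝ) 1)
    (hg : ContinuousWithinAt g (Icc 0 1) 1)
    (hinv : ∀ s ∈ Icc (0 : ℝ) 1, g (1 - α * (1 - s)) = g s) :
    ∀ s ∈ Icc (0 : ℝ) 1, g s = g 1 := by
  intro s hs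
  have horbit_mem : ∀ n : ℕ, 1 - α ^ n * (1 - s) ∈ Icc (0 : ℝ) 1 := fun n => by
    have := pow_le_one₀ hα.1 hα.2.le (n := n)
    have := pow_nonneg hα.1 n
    constructor <;> nlinarith [hs.1, hs.2]
  have horbit : ∀ n : ℕ, g (1 - α ^ n * (1 - s)) = g s := fun n => by
    induction n with
    | zero => simp
    | succ n ih => rw [← ih, ← hinv _ (horbit_mem n)]; ring_nf
  have hlim : Tendsto (fun n : ℕ => 1 - α ^ n * (1 - s)) atTop (𝓝[Icc 0 1] 1) := by
    refine tendsto_nhdsWithin_iff.2 ⟨?_, Eventually.of_forall horbit_mem⟩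
    simpa using ((tendsto_pow_atTop_nhds_zero_of_lt_one hα.1 hα.2).mul_const (1 - s)).const_sub 1
  exact tendsto_nhds_unique tendsto_const_nhds ((hg.tendsto.comp hlim).congr horbit)

theorem poisson_characterization_general (P : ℕ → ℝ) (hP : IsPMF P)
    (lam : ℝ)
    (α : ℝ) (hα : α ∈ Set.Ioo (0 : ℝ) 1)
    (hfix : P = Uop α lam P) :
    P = poissonPMF lam := by
  obtain ⟨hP0, hP1⟩ := hP
  have hPn : Summable fun x => ‖P x‖ := hP1.summable.norm
  let g : ℝ → ℝ := fun s => pgf P s * Real.exp (-(lam * (s - 1)))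
  have hg_inv : ∀ s ∈ Icc (0 : ℝ) 1, g (1 - α * (1 - s)) = g s := fun s hs => by
    simp only [g]
    conv_rhs => rw [hfix, pgf_Uop hP0 hP1.summable ⟨hα.1.le, hα.2.le⟩ lam hs]
    rw [mul_assoc, ← Real.exp_add]
    ring_nf
  have hg_cont : ContinuousWithinAt g (Icc 0 1) 1 :=
    (((continuousOn_pgf hPn).mono (Icc_subset_Icc_left (by norm_num))).mul
      (by fun_prop)).continuousWithinAt ⟨zero_le_one, le_rfl⟩
  have hg_one : g 1 = 1 := by simp [g, pgf, hP1.tsum_eq]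
  refine eq_of_pgf_eqOn hPn (by simpa using summable_norm_poissonPMF_mul_pow lam 1)
    fun s hs => ?_
  have hgs := apply_eq_apply_one_of_comp_homothety_eq ⟨hα.1.le, hα.2⟩ hg_cont hg_inv s
    (Ioo_subset_Icc_self hs)
  rw [hg_one] at hgs
  simp only [g] at hgs
  rw [Real.exp_neg, mul_inv_eq_one₀ (Real.exp_pos _).ne'] at hgs
  rw [hgs, pgf_poissonPMF]

/-- Characterization of the Poisson distribution: if `P` has mean λ and is a fixed
point of `U_α^λ` for some `α ∈ (0,1)`, then `P = Po(λ)`. -/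
theorem poisson_characterization (P : ℕ → ℝ) (hP : IsPMF P)
    (lam : ℝ) (hlam : 0 < lam)
    (hmean : HasSum (fun x : ℕ => P x * (x : ℝ)) lam)
    (α : ℝ) (hα : α ∈ Set.Ioo (0 : ℝ) 1)
    (hfix : P = Uop α lam P) :
    P = poissonPMF lam :=
  poisson_characterization_general P hP lam α hα hfix
end
end

section
/- Let X ~ P be a random variable on ℕ with mean λ > 0, let α ∈ (0,1), and let k ≥ 0 be such that the k-th factorial moment E[X^(k↓)] is finite. If X_{α,λ} is a random variable with distribution U_α^λ(P), then E[P_k^λ(X_{α,λ})] = α^k · E[P_k^λ(X)]. -/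
/-!
Everything is expressed through factorial moments `E[X^(l↓)]`. Thinning scales the `l`-th factorial
moment by `α^l`, the Poisson law `Po(μ)` has factorial moments `μ^l`, and the factorial moments of a
convolution obey the Vandermonde rule `(a + b)^(k↓) = Σ_j C(k,j) a^(j↓) b^((k-j)↓)`. The `k`-th Charlier
polynomial is a fixed combination of falling factorials, and the binomial theorem collapses the resulting
double sum: the Poisson part contributes `((1 - α)λ - λ)^(k-j) = (-αλ)^(k-j)`, leaving `α^k` in front.
-/

open scoped BigOperators
open Filter Topology

noncomputable section

/-- The Poisson–Charlier polynomial of order k: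
`P_k^λ(x) = (λ^k·k!)^{−1/2} · Σ_{ℓ=0}^k (−λ)^{k−ℓ}·C(k,ℓ)·x^(ℓ↓)`. -/
def charlier (lam : ℝ) (k : ℕ) (x : ℕ) : ℝ :=
  (1 / Real.sqrt (lam ^ k * k.factorial)) *
    ∑ l ∈ Finset.range (k + 1),
      (-lam) ^ (k - l) * (k.choose l : ℝ) * (x.descFactorial l : ℝ)

open Finset
open scoped Nat

theorem Nat.descFactorial_le_descFactorial_of_le {x j k : ℕ} (hjk : j ≤ k) (hkx : k ≤ x) :
    x.descFactorial j ≤ x.descFactorial k := by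
  rw [← Nat.descFactorial_mul_descFactorial hjk]
  exact Nat.le_mul_of_pos_left _ (Nat.descFactorial_pos.2 (by omega))

theorem summable_mul_descFactorial_of_le {f : ℕ → ℝ} {j k : ℕ} (hjk : j ≤ k)
    (hf : Summable fun x => f x * (x.descFactorial k : ℝ)) :
    Summable fun x => f x * (x.descFactorial j : ℝ) := by
  refine Summable.of_norm_bounded_eventually_nat hf.norm ?_
  filter_upwards [eventually_ge_atTop k] with x hkx
  rw [norm_mul, norm_mul, Real.norm_natCast, Real.norm_natCast]
  gcongr
  exact Nat.descFactorial_le_descFactorial_of_le hjk hkx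

theorem sum_choose_mul_choose_mul_pow_mul_pow {R : Type*} [CommSemiring R] (a b : R) (n j : ℕ) :
    ∑ i ∈ range (n + 1), (n.choose i * i.choose j : R) * a ^ (i - j) * b ^ (n - i) =
      n.choose j * (a + b) ^ (n - j) := by
  rcases lt_or_ge n j with hnj | hjn
  · rw [Nat.choose_eq_zero_of_lt hnj, Nat.cast_zero, zero_mul]
    refine sum_eq_zero fun i hi => ?_
    rw [Nat.choose_eq_zero_of_lt (n := i) (by simp at hi; omega)]
    simp
  obtain ⟨m, rfl⟩ := Nat.exists_eq_add_of_le hjn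
  have hlow : ∑ i ∈ range j, ((j + m).choose i * i.choose j : R) * a ^ (i - j) * b ^ (j + m - i)
      = 0 :=
    sum_eq_zero fun i hi => by simp [Nat.choose_eq_zero_of_lt (mem_range.1 hi)]
  rw [add_assoc, sum_range_add, hlow, zero_add, Nat.add_sub_cancel_left, add_pow, mul_sum]
  refine sum_congr rfl fun i _ => ?_
  have hchoose := Nat.choose_mul (n := j + m) (k := j + i) (s := j) (Nat.le_add_right j i)
  rw [Nat.add_sub_cancel_left, Nat.add_sub_cancel_left] at hchoose
  rw [← Nat.cast_mul, hchoose, Nat.add_sub_cancel_left, Nat.add_sub_add_left]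
  push_cast
  ring

theorem sum_choose_mul_pow_mul_pow_mul_descFactorial {R : Type*} [CommSemiring R] (a b : R)
    (x l : ℕ) :
    ∑ z ∈ range (x + 1), (x.choose z : R) * a ^ z * b ^ (x - z) * z.descFactorial l =
      x.descFactorial l * a ^ l * (a + b) ^ (x - l) := by
  have hterm : ∀ z, (x.choose z : R) * a ^ z * b ^ (x - z) * z.descFactorial l =
      l ! * a ^ l * ((x.choose z * z.choose l : R) * a ^ (z - l) * b ^ (x - z)) := by
    intro z
    rcases lt_or_ge z l with hzl | hlz
    · simp [Nat.descFactorial_eq_zero_iff_lt.2 hzl, Nat.choose_eq_zero_of_lt hzl]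
    obtain ⟨d, rfl⟩ := Nat.exists_eq_add_of_le hlz
    rw [Nat.descFactorial_eq_factorial_mul_choose, Nat.add_sub_cancel_left, pow_add]
    push_cast
    ring
  simp_rw [hterm, ← mul_sum, sum_choose_mul_choose_mul_pow_mul_pow,
    Nat.descFactorial_eq_factorial_mul_choose]
  push_cast
  ring

theorem hasSum_thin_mul_descFactorial {P : ℕ → ℝ} {α : ℝ} (hα0 : 0 ≤ α) (hα1 : α ≤ 1) {j : ℕ}
    (hP : Summable fun x => P x * (x.descFactorial j : ℝ)) :
    HasSum (fun z => thin α P z * (z.descFactorial j : ℝ))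
      (α ^ j * ∑' x, P x * (x.descFactorial j : ℝ)) := by
  let g : (ℕ → ℝ) → ℕ × ℕ → ℝ := fun Q p =>
    Q p.1 * (p.1.choose p.2 : ℝ) * α ^ p.2 * (1 - α) ^ (p.1 - p.2) * (p.2.descFactorial j : ℝ)
  have hrow : ∀ Q x, HasSum (fun z => g Q (x, z)) (α ^ j * (Q x * (x.descFactorial j : ℝ))) := by
    intro Q x
    convert hasSum_sum_of_ne_finset_zero (L := SummationFilter.unconditional ℕ)
      (s := range (x + 1)) (f := fun z => g Q (x, z))
      (fun z hz => by simp [g, Nat.choose_eq_zero_of_lt (by simpa using hz)]) using 1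
    have hbinom := sum_choose_mul_pow_mul_pow_mul_descFactorial α (1 - α) x j
    rw [add_sub_cancel, one_pow, mul_one] at hbinom
    simp only [g, mul_assoc, ← mul_sum]
    simp only [← mul_assoc, hbinom]
    ring
  have hnorm : ∀ p, ‖g P p‖ = g (fun x => |P x|) p := fun p => by
    simp only [g, Real.norm_eq_abs, abs_mul, abs_pow, Nat.abs_cast, abs_of_nonneg hα0,
      abs_of_nonneg (sub_nonneg.2 hα1)]
  -- Fubini applies because `‖g P‖ = g |P|`, whose rows sum to `α^j |P x| x^(j↓)`.
  have hsum : Summable (g P) := by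
    refine Summable.of_norm ?_
    simp_rw [hnorm]
    have hnonneg : 0 ≤ g (fun x => |P x|) := fun p => hnorm p ▸ norm_nonneg _
    refine (summable_prod_of_nonneg hnonneg).2
      ⟨fun x => (hrow (fun x => |P x|) x).summable, (hP.norm.mul_left (α ^ j)).congr fun x => ?_⟩
    rw [(hrow (fun x => |P x|) x).tsum_eq, norm_mul, Real.norm_natCast, Real.norm_eq_abs]
  have htotal : HasSum (g P) (α ^ j * ∑' x, P x * (x.descFactorial j : ℝ)) := by
    rw [(hP.hasSum.mul_left _).unique (hsum.hasSum.prod_fiberwise (hrow P))]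
    exact hsum.hasSum
  refine ((Equiv.prodComm ℕ ℕ).hasSum_iff.2 htotal).prod_fiberwise fun z => ?_
  rw [thin, ← tsum_mul_right]
  exact (hsum.prod_symm.prod_factor z).hasSum

theorem hasSum_poissonPMF_mul_descFactorial (μ : ℝ) (l : ℕ) :
    HasSum (fun n => poissonPMF μ n * (n.descFactorial l : ℝ)) (μ ^ l) := by
  rw [← hasSum_nat_add_iff' l]
  have hlow : ∑ i ∈ range l, poissonPMF μ i * (i.descFactorial l : ℝ) = 0 :=
    sum_eq_zero fun i hi => by simp [Nat.descFactorial_eq_zero_iff_lt.2 (mem_range.1 hi)]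
  have hshift : ∀ m, poissonPMF μ (m + l) * ((m + l).descFactorial l : ℝ) =
      μ ^ l * (Real.exp (-μ) * (μ ^ m / m !)) := by
    intro m
    have h := Nat.factorial_mul_descFactorial (Nat.le_add_left l m)
    rw [Nat.add_sub_cancel] at h
    simp only [poissonPMF]
    rw [← h]
    push_cast
    field_simp
    ring
  simp_rw [hlow, sub_zero, hshift]
  have hexp := (NormedSpace.expSeries_div_hasSum_exp μ).mul_left (Real.exp (-μ))
  rw [← Real.exp_eq_exp_ℝ, ← Real.exp_add, neg_add_cancel, Real.exp_zero] at hexp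
  simpa using hexp.mul_left (μ ^ l)

theorem Nat.add_descFactorial_eq_sum (a b k : ℕ) :
    (a + b).descFactorial k =
      ∑ j ∈ range (k + 1), k.choose j * (a.descFactorial j * b.descFactorial (k - j)) := by
  rw [Nat.descFactorial_eq_factorial_mul_choose, Nat.add_choose_eq,
    Nat.sum_antidiagonal_eq_sum_range_succ_mk, mul_sum]
  refine sum_congr rfl fun j hj => ?_
  rw [Nat.descFactorial_eq_factorial_mul_choose, Nat.descFactorial_eq_factorial_mul_choose,
    ← Nat.choose_mul_factorial_mul_factorial (mem_range_succ_iff.1 hj)]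
  ring

theorem hasSum_conv_mul_descFactorial {Q R mQ mR : ℕ → ℝ} {k : ℕ}
    (hQ : ∀ j ≤ k, HasSum (fun a => Q a * (a.descFactorial j : ℝ)) (mQ j))
    (hR : ∀ j ≤ k, HasSum (fun b => R b * (b.descFactorial j : ℝ)) (mR j)) :
    HasSum (fun n => conv Q R n * (n.descFactorial k : ℝ))
      (∑ j ∈ range (k + 1), k.choose j * mQ j * mR (k - j)) := by
  have hsplit : ∀ n, conv Q R n * (n.descFactorial k : ℝ) =
      ∑ j ∈ range (k + 1), (k.choose j : ℝ) * ∑ i ∈ range (n + 1),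
        Q i * (i.descFactorial j : ℝ) * (R (n - i) * ((n - i).descFactorial (k - j) : ℝ)) := by
    intro n
    simp_rw [conv, sum_mul, mul_sum]
    rw [sum_comm]
    refine sum_congr rfl fun i hi => ?_
    rw [← Nat.add_sub_of_le (mem_range_succ_iff.1 hi), Nat.add_sub_cancel_left,
      Nat.add_descFactorial_eq_sum]
    push_cast
    rw [mul_sum]
    exact sum_congr rfl fun j _ => by ring
  simp_rw [hsplit]
  refine hasSum_sum fun j hj => ?_
  have hjk : j ≤ k := mem_range_succ_iff.1 hj
  have hcauchy := hasSum_sum_range_mul_of_summable_norm (hQ j hjk).summable.norm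
    (hR (k - j) (Nat.sub_le k j)).summable.norm
  rw [(hQ j hjk).tsum_eq, (hR (k - j) (Nat.sub_le k j)).tsum_eq] at hcauchy
  simpa only [mul_assoc] using hcauchy.mul_left (k.choose j : ℝ)

/-- The Charlier expectation `√(λ^k k!) · E[P_k^λ(X)]`, written through the factorial moments
`m l = E[X^(l↓)]`. -/
def charlierMoment {R : Type*} [CommRing R] (lam : R) (k : ℕ) (m : ℕ → R) : R :=
  ∑ l ∈ range (k + 1), (-lam) ^ (k - l) * k.choose l * m l

theorem hasSum_mul_charlier {Q m : ℕ → ℝ} (lam : ℝ) {k : ℕ}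
    (hm : ∀ l ≤ k, HasSum (fun x => Q x * (x.descFactorial l : ℝ)) (m l)) :
    HasSum (fun x => Q x * charlier lam k x)
      (1 / √(lam ^ k * k !) * charlierMoment lam k m) := by
  have hexpand : ∀ x, Q x * charlier lam k x = 1 / √(lam ^ k * k !) *
      ∑ l ∈ range (k + 1), (-lam) ^ (k - l) * k.choose l * (Q x * (x.descFactorial l : ℝ)) := by
    intro x
    rw [charlier, mul_left_comm, mul_sum]
    exact congrArg _ (sum_congr rfl fun l _ => by ring)
  simp_rw [hexpand]
  exact (hasSum_sum fun l hl => (hm l (mem_range_succ_iff.1 hl)).mul_left _).mul_left _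

theorem charlierMoment_thin_conv_poisson {R : Type*} [CommRing R] (α lam : R) (m : ℕ → R)
    (k : ℕ) :
    charlierMoment lam k
        (fun l => ∑ j ∈ range (l + 1), l.choose j * (α ^ j * m j) * ((1 - α) * lam) ^ (l - j)) =
      α ^ k * charlierMoment lam k m := by
  have hextend : ∀ l ∈ range (k + 1),
      ∑ j ∈ range (l + 1), (l.choose j : R) * (α ^ j * m j) * ((1 - α) * lam) ^ (l - j) =
        ∑ j ∈ range (k + 1), (l.choose j : R) * (α ^ j * m j) * ((1 - α) * lam) ^ (l - j) := by
    intro l hl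
    refine sum_subset (range_subset_range.2 (mem_range.1 hl)) fun j _ hj => ?_
    rw [Nat.choose_eq_zero_of_lt (by simpa using hj)]
    simp
  rw [charlierMoment, sum_congr rfl fun l hl => by rw [hextend l hl]]
  simp_rw [mul_sum]
  rw [sum_comm, charlierMoment, mul_sum]
  refine sum_congr rfl fun j hj => ?_
  have hbinom := sum_choose_mul_choose_mul_pow_mul_pow ((1 - α) * lam) (-lam) k j
  rw [show (1 - α) * lam + -lam = α * -lam by ring, mul_pow] at hbinom
  rw [← pow_mul_pow_sub α (mem_range_succ_iff.1 hj)]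
  calc _ = α ^ j * m j * ∑ l ∈ range (k + 1),
        (k.choose l * l.choose j : R) * ((1 - α) * lam) ^ (l - j) * (-lam) ^ (k - l) := by
          rw [mul_sum]
          exact sum_congr rfl fun l _ => by ring
    _ = _ := by
          rw [hbinom]
          ring

theorem charlier_moment_Uop_general (P : ℕ → ℝ)
    (lam : ℝ)
    (α : ℝ) (hα : α ∈ Set.Ioo (0 : ℝ) 1) (k : ℕ)
    (hfm : Summable (fun x : ℕ => P x * (x.descFactorial k : ℝ))) :
    ∑' x : ℕ, Uop α lam P x * charlier lam k x =
      α ^ k * ∑' x : ℕ, P x * charlier lam k x := by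
  have hP : ∀ j ≤ k, HasSum (fun x => P x * (x.descFactorial j : ℝ))
      (∑' x, P x * (x.descFactorial j : ℝ)) :=
    fun j hj => (summable_mul_descFactorial_of_le hj hfm).hasSum
  have hU : ∀ l ≤ k, HasSum (fun n => Uop α lam P n * (n.descFactorial l : ℝ))
      (∑ j ∈ range (l + 1), l.choose j * (α ^ j * ∑' x, P x * (x.descFactorial j : ℝ)) *
        ((1 - α) * lam) ^ (l - j)) := fun l hl =>
    hasSum_conv_mul_descFactorial
      (fun j hj => hasSum_thin_mul_descFactorial hα.1.le hα.2.le
        (summable_mul_descFactorial_of_le (hj.trans hl) hfm))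
      (fun j _ => hasSum_poissonPMF_mul_descFactorial _ j)
  rw [(hasSum_mul_charlier lam hU).tsum_eq, (hasSum_mul_charlier lam hP).tsum_eq,
    charlierMoment_thin_conv_poisson]
  ring

/-- Poisson–Charlier moments under the operator `U_α^λ`:
`E[P_k^λ(X_{α,λ})] = α^k · E[P_k^λ(X)]`. -/
theorem charlier_moment_Uop (P : ℕ → ℝ) (hP : IsPMF P)
    (lam : ℝ) (hlam : 0 < lam)
    (hmean : HasSum (fun x : ℕ => P x * (x : ℝ)) lam)
    (α : ℝ) (hα : α ∈ Set.Ioo (0 : ℝ) 1) (k : ℕ)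
    (hfm : Summable (fun x : ℕ => P x * (x.descFactorial k : ℝ))) :
    ∑' x : ℕ, Uop α lam P x * charlier lam k x =
      α ^ k * ∑' x : ℕ, P x * charlier lam k x :=
  charlier_moment_Uop_general P lam α hα k hfm
end
end

section
/- Let X ~ P be a random variable on ℕ that is Poisson bounded with ratio λ. Then for every x ≥ 0 the series Σ_{ℓ=0}^∞ (−1)^ℓ · E[X^((x+ℓ)↓)] / ℓ! converges absolutely, and P(x) = (1/x!) · Σ_{ℓ=0}^∞ (−1)^ℓ · E[X^((x+ℓ)↓)] / ℓ!. Moreover, for every m ≥ 0, the truncated sum (1/x!) · Σ_{ℓ=0}^m (−1)^ℓ · E[X^((x+ℓ)↓)] / ℓ! is an upper bound for P(x) when m is even, and a lower bound when m is odd. -/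
open scoped BigOperators ENNReal
open Filter Topology

noncomputable section

/-- The k-th factorial moment, as a real number. -/
def fm (P : ℕ → ℝ) (k : ℕ) : ℝ := (fmE P k).toReal

/-!
Since `y^{(x+l)↓} / l! = y^{x↓} · C(y-x, l)`, exchanging the finite sum over `l` with the sum over
`y` writes the `m`-th truncation as `∑_y P(y) y^{x↓} ∑_{l ≤ m} (-1)^l C(y-x, l)`, while
`x! P(x) = ∑_y P(y) y^{x↓} [y = x]`. The partial alternating binomial sum is `1` for `y = x` and
`(-1)^m C(y-x-1, m)` for `y > x`, so it lies above or below the indicator of `y = x` according to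
the parity of `m`: these are the Bonferroni bounds. Poisson boundedness makes the series absolutely
convergent (terms at most `λ^{x+l}/l!`), and the bounds squeeze its sum to `x! P(x)`.
-/

open Finset
open scoped Nat

theorem Int.ite_le_alternating_sum_range_choose_of_even {n m : ℕ} (hm : Even m) :
    (if n = 0 then 1 else 0 : ℤ) ≤ ∑ l ∈ Finset.range (m + 1), (-1) ^ l * (n.choose l : ℤ) := by
  cases n with
  | zero => simp [sum_range_succ']
  | succ n =>
    rw [alternating_sum_range_choose_eq_choose, hm.neg_one_pow]
    simp

theorem Int.alternating_sum_range_choose_le_ite_of_odd {n m : ℕ} (hm : Odd m) :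
    ∑ l ∈ Finset.range (m + 1), (-1) ^ l * (n.choose l : ℤ) ≤ (if n = 0 then 1 else 0 : ℤ) := by
  cases n with
  | zero => simp [sum_range_succ']
  | succ n =>
    rw [alternating_sum_range_choose_eq_choose, hm.neg_one_pow]
    simp

theorem Nat.descFactorial_add_div_factorial (y x l : ℕ) :
    (y.descFactorial (x + l) : ℝ) / l ! = y.descFactorial x * (y - x).choose l := by
  rw [← Nat.descFactorial_mul_descFactorial (Nat.le_add_right x l), Nat.add_sub_cancel_left,
    Nat.descFactorial_eq_factorial_mul_choose]
  push_cast
  field_simp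

theorem Nat.sum_range_alternating_descFactorial_add_div_factorial (y x m : ℕ) :
    ∑ l ∈ range (m + 1), (-1 : ℝ) ^ l * y.descFactorial (x + l) / l !
      = y.descFactorial x *
          ((∑ l ∈ range (m + 1), (-1) ^ l * ((y - x).choose l : ℤ) : ℤ) : ℝ) := by
  push_cast
  rw [mul_sum]
  refine sum_congr rfl fun l _ => ?_
  rw [mul_div_assoc, Nat.descFactorial_add_div_factorial]
  ring

-- For `y < x` the truncated `y - x` is `0`, but then `y.descFactorial x = 0` kills the term.
theorem Nat.descFactorial_mul_ite_sub_eq_zero (y x : ℕ) :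
    (y.descFactorial x : ℝ) * ((if y - x = 0 then 1 else 0 : ℤ) : ℝ)
      = if y = x then (x ! : ℝ) else 0 := by
  rcases lt_trichotomy y x with h | rfl | h
  · simp [Nat.descFactorial_of_lt h, h.ne]
  · simp [Nat.descFactorial_self]
  · simp [Nat.sub_ne_zero_of_lt h, h.ne']

theorem summable_abs_alternating_div_factorial {a : ℕ → ℝ} {c : ℝ} (ha : ∀ k, |a k| ≤ c ^ k)
    (x : ℕ) : Summable fun l : ℕ => |(-1 : ℝ) ^ l * a (x + l) / l !| := by
  refine ((Real.summable_pow_div_factorial c).mul_left (c ^ x)).of_nonneg_of_le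
    (fun l => abs_nonneg _) fun l => ?_
  rw [abs_div, abs_mul, abs_neg_one_pow, one_mul, Nat.abs_cast, ← mul_div_assoc, ← pow_add]
  gcongr
  exact ha (x + l)

theorem Summable.tsum_eq_of_even_le_of_odd_ge {f : ℕ → ℝ} (hf : Summable f) {v : ℝ}
    (heven : ∀ m, Even m → v ≤ ∑ l ∈ range (m + 1), f l)
    (hodd : ∀ m, Odd m → ∑ l ∈ range (m + 1), f l ≤ v) : ∑' l, f l = v := by
  have htend := hf.hasSum.tendsto_sum_nat
  have hodd_idx : Tendsto (fun k : ℕ => 2 * k + 1) atTop atTop :=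
    tendsto_atTop_atTop.2 fun b => ⟨b, fun a ha => by omega⟩
  have heven_idx : Tendsto (fun k : ℕ => 2 * k + 2) atTop atTop :=
    tendsto_atTop_atTop.2 fun b => ⟨b, fun a ha => by omega⟩
  exact le_antisymm
    (le_of_tendsto' (htend.comp heven_idx) fun k => hodd (2 * k + 1) (odd_two_mul_add_one k))
    (ge_of_tendsto' (htend.comp hodd_idx) fun k => heven (2 * k) (even_two_mul k))

section FactorialMoments

variable {P : ℕ → ℝ}

theorem fm_nonneg (k : ℕ) : 0 ≤ fm P k := ENNReal.toReal_nonneg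

theorem IsPB.fmE_ne_top {lam : ℝ} (hPB : IsPB P lam) (k : ℕ) : fmE P k ≠ ⊤ :=
  ne_top_of_le_ne_top (ENNReal.pow_ne_top ENNReal.ofReal_ne_top) (hPB k)

theorem IsPB.fm_le {lam : ℝ} (hPB : IsPB P lam) (k : ℕ) :
    fm P k ≤ (ENNReal.ofReal lam).toReal ^ k := by
  rw [← ENNReal.toReal_pow]
  exact ENNReal.toReal_mono (ENNReal.pow_ne_top ENNReal.ofReal_ne_top) (hPB k)

theorem hasSum_fm (hP0 : ∀ y, 0 ≤ P y) {k : ℕ} (hk : fmE P k ≠ ⊤) :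
    HasSum (fun y : ℕ => P y * y.descFactorial k) (fm P k) := by
  have h := ENNReal.hasSum_toReal hk
  rw [← ENNReal.tsum_toReal_eq fun y => ENNReal.mul_ne_top ENNReal.ofReal_ne_top
    (ENNReal.natCast_ne_top _)] at h
  rw [fm, fmE]
  simpa only [ENNReal.toReal_mul, ENNReal.toReal_ofReal (hP0 _), ENNReal.toReal_natCast] using h

theorem hasSum_sum_range_alternating_fm (hP0 : ∀ y, 0 ≤ P y) (hfin : ∀ k, fmE P k ≠ ⊤)
    (x m : ℕ) :
    HasSum (fun y : ℕ => P y * y.descFactorial x *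
        ((∑ l ∈ range (m + 1), (-1) ^ l * ((y - x).choose l : ℤ) : ℤ) : ℝ))
      (∑ l ∈ range (m + 1), (-1 : ℝ) ^ l * fm P (x + l) / l !) := by
  have h := hasSum_sum fun l (_ : l ∈ range (m + 1)) =>
    ((hasSum_fm hP0 (hfin (x + l))).mul_left ((-1 : ℝ) ^ l)).div_const (l ! : ℝ)
  refine h.congr_fun fun y => ?_
  rw [mul_assoc, ← Nat.sum_range_alternating_descFactorial_add_div_factorial, mul_sum]
  exact sum_congr rfl fun l _ => by ring

theorem hasSum_factorial_mul (x : ℕ) :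
    HasSum (fun y : ℕ => P y * y.descFactorial x * ((if y - x = 0 then 1 else 0 : ℤ) : ℝ))
      (x ! * P x) := by
  refine (hasSum_ite_eq x (x ! * P x)).congr_fun fun y => ?_
  rw [mul_assoc, Nat.descFactorial_mul_ite_sub_eq_zero]
  split_ifs with h
  · rw [h, mul_comm]
  · rw [mul_zero]

theorem factorial_mul_le_sum_range_alternating_fm (hP0 : ∀ y, 0 ≤ P y)
    (hfin : ∀ k, fmE P k ≠ ⊤) {m : ℕ} (hm : Even m) (x : ℕ) :
    x ! * P x ≤ ∑ l ∈ range (m + 1), (-1 : ℝ) ^ l * fm P (x + l) / l ! :=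
  hasSum_le (fun y => mul_le_mul_of_nonneg_left
      (Int.cast_le.2 (Int.ite_le_alternating_sum_range_choose_of_even hm))
      (mul_nonneg (hP0 y) (Nat.cast_nonneg _)))
    (hasSum_factorial_mul x) (hasSum_sum_range_alternating_fm hP0 hfin x m)

theorem sum_range_alternating_fm_le_factorial_mul (hP0 : ∀ y, 0 ≤ P y)
    (hfin : ∀ k, fmE P k ≠ ⊤) {m : ℕ} (hm : Odd m) (x : ℕ) :
    ∑ l ∈ range (m + 1), (-1 : ℝ) ^ l * fm P (x + l) / l ! ≤ x ! * P x :=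
  hasSum_le (fun y => mul_le_mul_of_nonneg_left
      (Int.cast_le.2 (Int.alternating_sum_range_choose_le_ite_of_odd hm))
      (mul_nonneg (hP0 y) (Nat.cast_nonneg _)))
    (hasSum_sum_range_alternating_fm hP0 hfin x m) (hasSum_factorial_mul x)

end FactorialMoments

theorem pb_alternating_representation_general (P : ℕ → ℝ) (hP : IsPMF P)
    (lam : ℝ) (hPB : IsPB P lam) (x : ℕ) :
    Summable (fun l : ℕ => |(-1 : ℝ) ^ l * fm P (x + l) / l.factorial|) ∧
    P x = (1 / (x.factorial : ℝ)) *
        ∑' l : ℕ, (-1 : ℝ) ^ l * fm P (x + l) / l.factorial ∧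
    (∀ m : ℕ, Even m →
      P x ≤ (1 / (x.factorial : ℝ)) *
        ∑ l ∈ Finset.range (m + 1), (-1 : ℝ) ^ l * fm P (x + l) / l.factorial) ∧
    (∀ m : ℕ, Odd m →
      (1 / (x.factorial : ℝ)) *
        ∑ l ∈ Finset.range (m + 1), (-1 : ℝ) ^ l * fm P (x + l) / l.factorial ≤ P x) := by
  have hfin := hPB.fmE_ne_top
  have heven m (hm : Even m) := factorial_mul_le_sum_range_alternating_fm hP.1 hfin hm x
  have hodd m (hm : Odd m) := sum_range_alternating_fm_le_factorial_mul hP.1 hfin hm x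
  have habs := summable_abs_alternating_div_factorial
    (fun k => (abs_of_nonneg (fm_nonneg k)).trans_le (hPB.fm_le k)) x
  have htsum := habs.of_abs.tsum_eq_of_even_le_of_odd_ge heven hodd
  have hx : (0 : ℝ) < x ! := by positivity
  refine ⟨habs, ?_, fun m hm => ?_, fun m hm => ?_⟩
  · rw [htsum]
    field_simp
  · rw [one_div, le_inv_mul_iff₀ hx]
    exact heven m hm
  · rw [one_div, inv_mul_le_iff₀ hx]
    exact hodd m hm

/-- Alternating-series representation of a Poisson bounded pmf:
`P(x) = (1/x!)·Σ_{ℓ} (−1)^ℓ·E[X^((x+ℓ)↓)]/ℓ!`, with absolute convergence, and the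
truncations are upper bounds for even m and lower bounds for odd m. -/
theorem pb_alternating_representation (P : ℕ → ℝ) (hP : IsPMF P)
    (lam : ℝ) (hlam : 0 < lam) (hPB : IsPB P lam) (x : ℕ) :
    Summable (fun l : ℕ => |(-1 : ℝ) ^ l * fm P (x + l) / l.factorial|) ∧
    P x = (1 / (x.factorial : ℝ)) *
        ∑' l : ℕ, (-1 : ℝ) ^ l * fm P (x + l) / l.factorial ∧
    (∀ m : ℕ, Even m →
      P x ≤ (1 / (x.factorial : ℝ)) *
        ∑ l ∈ Finset.range (m + 1), (-1 : ℝ) ^ l * fm P (x + l) / l.factorial) ∧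
    (∀ m : ℕ, Odd m →
      (1 / (x.factorial : ℝ)) *
        ∑ l ∈ Finset.range (m + 1), (-1 : ℝ) ^ l * fm P (x + l) / l.factorial ≤ P x) :=
  pb_alternating_representation_general P hP lam hPB x
end
end
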